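/- Let A ∈ ℝ^{n×n} and B ∈ ℝ^{n×m} be such that there exists K ∈ ℝ^{m×n} with (A+BK)^k → 0 as k → ∞, let 𝒞 ⊆ ℝ^{n+m} be a proper C-set, and let ℒ ⊆ ℝⁿ be a proper C-set verifying the control Lyapunov decrease condition (for every x ∈ ℝⁿ there exists u ∈ ℝᵐ with γ(ℒ, Ax+Bu) + γ(𝒞, (x,u)) ≤ γ(ℒ, x)). Let (𝒫̲_k)_{k≥1} be the lower iterates obtained from the initial polar S = {0} (𝒫̲₁ = P_x(𝒞* ⊕ Mᵀ{0})* = P_x𝒞, 𝒫̲_{k+1} = P_x(𝒞* ⊕ Mᵀ(𝒫̲_k)*)*), and let (𝒫̄_k)_{k≥1} be the upper iterates obtained from the initial polar S = ℒ* (𝒫̄₁ = P_x(𝒞* ⊕ Mᵀℒ*)*, 𝒫̄_{k+1} = P_x(𝒞* ⊕ Mᵀ(𝒫̄_k)*)*). If 𝒫̲_k converges in Hausdorff distance to a proper C-set 𝒫̲_∞ and 𝒫̄_k converges in Hausdorff distance to a proper C-set 𝒫̄_∞, then 𝒫̲_∞ = 𝒫̄_∞. -/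

import Mathlib

open Pointwise Filter Topology Matrix

noncomputable section

/-- ℝⁿ with the standard (Euclidean) inner product. -/
abbrev Rsp (n : ℕ) := EuclideanSpace ℝ (Fin n)

/-- ℝ^{n+m} realized as the L²-product ℝⁿ × ℝᵐ. -/
abbrev Rsp2 (n m : ℕ) := WithLp 2 (Rsp n × Rsp m)

/-- A C-set: compact, convex, containing the origin. -/
def IsCSet {E : Type*} [NormedAddCommGroup E] [NormedSpace ℝ E] (X : Set E) : Prop :=
  IsCompact X ∧ Convex ℝ X ∧ (0 : E) ∈ X

/-- A proper C-set: a C-set containing the origin in its interior. -/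
def IsProperCSet {E : Type*} [NormedAddCommGroup E] [NormedSpace ℝ E] (X : Set E) : Prop :=
  IsCSet X ∧ (0 : E) ∈ interior X

/-- The polar set 𝒳* = {y : ⟨y,x⟩ ≤ 1 for all x ∈ 𝒳}. -/
def polarSet {E : Type*} [NormedAddCommGroup E] [InnerProductSpace ℝ E] (X : Set E) : Set E :=
  {y | ∀ x ∈ X, inner ℝ y x ≤ (1 : ℝ)}

/-- The Minkowski (gauge) function γ(𝒳,y) = inf{η ≥ 0 : y ∈ η𝒳}. -/
def mgauge {E : Type*} [NormedAddCommGroup E] [NormedSpace ℝ E] (X : Set E) (y : E) : ℝ :=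
  sInf {η : ℝ | 0 ≤ η ∧ y ∈ η • X}

variable {n m : ℕ}

/-- The map M = (A B) : ℝ^{n+m} → ℝⁿ, M(x,u) = Ax + Bu. -/
def Mfwd (A : Matrix (Fin n) (Fin n) ℝ) (B : Matrix (Fin n) (Fin m) ℝ) (w : Rsp2 n m) : Rsp n :=
  Matrix.toEuclideanLin A w.ofLp.1 + Matrix.toEuclideanLin B w.ofLp.2

/-- The transpose map Mᵀ : ℝⁿ → ℝ^{n+m}, Mᵀp = (Aᵀp, Bᵀp). -/
def Mtr (A : Matrix (Fin n) (Fin n) ℝ) (B : Matrix (Fin n) (Fin m) ℝ) (p : Rsp n) : Rsp2 n m :=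
  WithLp.toLp 2 (Matrix.toEuclideanLin Aᵀ p, Matrix.toEuclideanLin Bᵀ p)

/-- The projection P_x : ℝ^{n+m} → ℝⁿ, (x,u) ↦ x. -/
def Pxproj : Rsp2 n m → Rsp n := fun w => w.ofLp.1


/-!
Write `F S = {x | ∃ u, γ(𝒞, (x,u)) + γ(S, Ax+Bu) ≤ 1}`. By the polar calculus the iterates are
`𝒫̲_k = F^{k+1} ℝⁿ` (the polar of `{0}` being `ℝⁿ`) and `𝒫̄_k = F^{k+1} ℒ`, and `γ(F^k S, ·)` is the
optimal cost of `k` stages with running cost `γ(𝒞, ·)` and terminal cost `γ(S, ·)`; hence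
`𝒫̄_k ⊆ 𝒫̲_k`. Conversely, let `𝒞 ⊆ R Bⁿ⁺ᵐ` and `ρ Bⁿ ⊆ ℒ`. Along `k` stages of running cost `J`
some stage costs at most `J / k`, so its state `x_i` has `γ(ℒ, x_i) ≤ R J / (ρ k)`. The Lyapunov
condition makes `γ(F^k ℒ, ·)` decrease in `k`, so stopping at `x_i` gives
`γ(F^k ℒ, x) ≤ γ(F^i ℒ, x) ≤ J + R J / (ρ k)`, that is `𝒫̲_k ⊆ (1 + R / (ρ (k+1))) 𝒫̄_k`.
So the Hausdorff distance between `𝒫̲_k` and `𝒫̄_k` is `O(1/k)` and the two limits coincide.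
-/

open Metric WithLp
open scoped RealInnerProductSpace

structure IsClosedConvexNhdZero {E : Type*} [NormedAddCommGroup E] [NormedSpace ℝ E]
    (X : Set E) : Prop where
  isClosed : IsClosed X
  convex : Convex ℝ X
  mem_nhds : X ∈ 𝓝 (0 : E)

section Gauge

variable {E : Type*} [NormedAddCommGroup E] [NormedSpace ℝ E] {X Y : Set E} {r : ℝ}

lemma mgauge_eq_gauge (hX : X.Nonempty) : mgauge X = gauge X := by
  funext y
  rcases eq_or_ne y 0 with rfl | hy
  · have h0 : (0 : ℝ) ∈ {η : ℝ | 0 ≤ η ∧ (0 : E) ∈ η • X} :=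
      ⟨le_rfl, by rw [Set.zero_smul_set hX]; rfl⟩
    rw [gauge_zero]
    exact le_antisymm (csInf_le ⟨0, fun _ h => h.1⟩ h0) (le_csInf ⟨0, h0⟩ fun _ h => h.1)
  · have hη : ∀ η : ℝ, y ∈ η • X → η ≠ 0 := by
      rintro η hyη rfl
      rw [Set.zero_smul_set hX] at hyη
      exact hy hyη
    simp only [mgauge, gauge]
    congr 1
    ext η
    exact ⟨fun h => ⟨lt_of_le_of_ne h.1 (hη η h.2).symm, h.2⟩, fun h => ⟨h.1.le, h.2⟩⟩

lemma gauge_smul_add_smul_le (hXv : Convex ℝ X) (hX : Absorbent ℝ X) {a b : ℝ} (ha : 0 ≤ a)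
    (hb : 0 ≤ b) (v w : E) :
    gauge X (a • v + b • w) ≤ a * gauge X v + b * gauge X w := by
  rw [← smul_eq_mul, ← smul_eq_mul, ← gauge_smul_of_nonneg ha, ← gauge_smul_of_nonneg hb]
  exact gauge_add_le hXv hX _ _

lemma gauge_le_norm_div_of_ball_subset (hr : 0 < r) (h : ball 0 r ⊆ X) (x : E) :
    gauge X x ≤ ‖x‖ / r := by
  rw [le_div_iff₀ hr, mul_comm]
  exact mul_gauge_le_norm h

lemma norm_le_mul_gauge_of_subset_closedBall (hX : Absorbent ℝ X) (hr : 0 < r)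
    (h : X ⊆ closedBall 0 r) (x : E) : ‖x‖ ≤ r * gauge X x :=
  (div_le_iff₀' hr).1 (le_gauge_of_subset_closedBall hX hr.le h)

lemma hausdorffDist_le_of_subset_smul {ε R : ℝ} (hε : 0 ≤ ε) (hR : 0 ≤ R) (hYX : Y ⊆ X)
    (hXY : X ⊆ (1 + ε) • Y) (hY : Y ⊆ closedBall 0 R) : hausdorffDist X Y ≤ ε * R := by
  refine hausdorffDist_le_of_mem_dist (mul_nonneg hε hR) ?_
    fun y hy => ⟨y, hYX hy, by rw [dist_self]; positivity⟩
  rintro _ hx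
  obtain ⟨y, hy, rfl⟩ := hXY hx
  refine ⟨y, hy, ?_⟩
  show dist ((1 + ε) • y) y ≤ ε * R
  rw [dist_eq_norm, add_smul, one_smul, add_sub_cancel_left, norm_smul, Real.norm_of_nonneg hε]
  exact mul_le_mul_of_nonneg_left (mem_closedBall_zero_iff.1 (hY hy)) hε

lemma IsProperCSet.isClosedConvexNhdZero (hX : IsProperCSet X) : IsClosedConvexNhdZero X :=
  ⟨hX.1.1.isClosed, hX.1.2.1, mem_interior_iff_mem_nhds.1 hX.2⟩

namespace IsClosedConvexNhdZero

lemma univ : IsClosedConvexNhdZero (Set.univ : Set E) :=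
  ⟨isClosed_univ, convex_univ, Filter.univ_mem⟩

lemma absorbent (hX : IsClosedConvexNhdZero X) : Absorbent ℝ X :=
  absorbent_nhds_zero hX.mem_nhds

lemma zero_mem (hX : IsClosedConvexNhdZero X) : (0 : E) ∈ X :=
  mem_of_mem_nhds hX.mem_nhds

lemma mem_smul_of_gauge_le (hX : IsClosedConvexNhdZero X) {x : E} {t : ℝ} (ht : 0 < t)
    (h : gauge X x ≤ t) : x ∈ t • X := by
  rw [Set.mem_smul_set_iff_inv_smul_mem₀ ht.ne', ← hX.isClosed.closure_eq,
    ← gauge_le_one_iff_mem_closure hX.convex hX.mem_nhds,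
    gauge_smul_of_nonneg (inv_nonneg.2 ht.le), smul_eq_mul, inv_mul_le_one₀ ht]
  exact h

lemma subset_smul_of_gauge_le (hX : IsClosedConvexNhdZero X) {c : ℝ} (hc : 0 < c)
    (h : ∀ y, gauge X y ≤ c * gauge Y y) : Y ⊆ c • X := fun y hy =>
  hX.mem_smul_of_gauge_le hc
    ((h y).trans (mul_le_of_le_one_right hc.le (gauge_le_one_of_mem hy)))

end IsClosedConvexNhdZero

end Gauge

section Polar

variable {E : Type*} [NormedAddCommGroup E] [InnerProductSpace ℝ E] {X : Set E}

lemma zero_mem_polarSet : (0 : E) ∈ polarSet X := fun x _ => by simp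

lemma polarSet_univ : polarSet (Set.univ : Set E) = {0} := by
  refine Set.Subset.antisymm (fun y hy => ?_) (Set.singleton_subset_iff.2 zero_mem_polarSet)
  by_contra hy0
  have hpos : 0 < ⟪y, y⟫ := real_inner_self_pos.2 hy0
  have h := hy ((2 / ⟪y, y⟫) • y) trivial
  rw [real_inner_smul_right, div_mul_cancel₀ _ hpos.ne'] at h
  norm_num at h

lemma inner_le_gauge_of_mem_polarSet (hX : Absorbent ℝ X) {a : E} (ha : a ∈ polarSet X)
    (y : E) : ⟪a, y⟫ ≤ gauge X y := by
  by_contra! hlt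
  obtain ⟨b, hb, hba, c, hc, rfl⟩ := exists_lt_of_gauge_lt hX hlt
  rw [real_inner_smul_right] at hba
  nlinarith [ha c hc]

lemma polarSet_polarSet_subset [CompleteSpace E] (hXc : IsClosed X) (hXv : Convex ℝ X)
    (hX0 : (0 : E) ∈ X) : polarSet (polarSet X) ⊆ X := by
  intro w hw
  by_contra hwX
  obtain ⟨f, s, hfX, hfw⟩ := geometric_hahn_banach_closed_point hXv hXc hwX
  have hs : 0 < s := by simpa using hfX 0 hX0
  set a := (InnerProductSpace.toDual ℝ E).symm (s⁻¹ • f)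
  have ha : ∀ x, ⟪a, x⟫ = s⁻¹ * f x := fun x => by
    simp [a, real_inner_smul_left, InnerProductSpace.toDual_symm_apply]
  have haX : a ∈ polarSet X := fun x hx => by
    rw [ha, inv_mul_le_one₀ hs]
    exact (hfX x hx).le
  have hwa := hw a haX
  rw [real_inner_comm, ha, inv_mul_le_one₀ hs] at hwa
  linarith

lemma gauge_le_of_forall_inner_le [CompleteSpace E] (hXc : IsClosed X) (hXv : Convex ℝ X)
    (hX0 : (0 : E) ∈ X) {y : E} {s : ℝ} (hs : 0 ≤ s) (h : ∀ a ∈ polarSet X, ⟪a, y⟫ ≤ s) :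
    gauge X y ≤ s := by
  refine le_of_forall_gt_imp_ge_of_dense fun t hst => ?_
  have ht : 0 < t := hs.trans_lt hst
  refine gauge_le_of_mem ht.le ((Set.mem_smul_set_iff_inv_smul_mem₀ ht.ne' _ _).2 ?_)
  refine polarSet_polarSet_subset hXc hXv hX0 fun a ha => ?_
  rw [real_inner_smul_left, real_inner_comm, inv_mul_le_one₀ ht]
  exact (h a ha).trans hst.le

end Polar

lemma eq_of_tendsto_hausdorffDist {α : Type*} [MetricSpace α] {X Y : Set α}
    {Xs Ys : ℕ → Set α} (hX : IsCompact X) (hY : IsCompact Y) (hXne : X.Nonempty)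
    (hYne : Y.Nonempty) (hXsne : ∀ k, (Xs k).Nonempty)
    (hXsb : ∀ k, Bornology.IsBounded (Xs k)) (hYsne : ∀ k, (Ys k).Nonempty)
    (hYsb : ∀ k, Bornology.IsBounded (Ys k))
    (hXs : Tendsto (fun k => hausdorffDist (Xs k) X) atTop (𝓝 0))
    (hYs : Tendsto (fun k => hausdorffDist (Ys k) Y) atTop (𝓝 0))
    (hXYs : Tendsto (fun k => hausdorffDist (Xs k) (Ys k)) atTop (𝓝 0)) : X = Y := by
  have hXY : ∀ k, hausdorffDist X Y ≤
      hausdorffDist (Xs k) X + hausdorffDist (Xs k) (Ys k) + hausdorffDist (Ys k) Y := fun k =>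
    calc hausdorffDist X Y ≤ hausdorffDist X (Xs k) + hausdorffDist (Xs k) Y :=
          hausdorffDist_triangle (hausdorffEDist_ne_top_of_nonempty_of_bounded hXne (hXsne k)
            hX.isBounded (hXsb k))
      _ ≤ hausdorffDist X (Xs k) + (hausdorffDist (Xs k) (Ys k) + hausdorffDist (Ys k) Y) :=
          add_le_add_right (hausdorffDist_triangle (hausdorffEDist_ne_top_of_nonempty_of_bounded
            (hXsne k) (hYsne k) (hXsb k) (hYsb k))) _
      _ = _ := by rw [hausdorffDist_comm (s := X)]; ring
  have h0 : hausdorffDist X Y ≤ 0 :=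
    ge_of_tendsto' (by simpa using (hXs.add hXYs).add hYs) hXY
  exact (hX.isClosed.hausdorffDist_zero_iff_eq hY.isClosed
    (hausdorffEDist_ne_top_of_nonempty_of_bounded hXne hYne hX.isBounded hY.isBounded)).1
    (le_antisymm h0 hausdorffDist_nonneg)

-- Without this shortcut, instance synthesis times out through the `WithLp` product structure.
instance : ContinuousSMul ℝ (Rsp2 n m) := IsBoundedSMul.continuousSMul

section Bellman

variable (A : Matrix (Fin n) (Fin n) ℝ) (B : Matrix (Fin n) (Fin m) ℝ) (C : Set (Rsp2 n m))

lemma continuous_Mfwd : Continuous (Mfwd A B) :=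
  ((Matrix.toEuclideanLin A).continuous_of_finiteDimensional.comp
    (WithLp.fstL 2 ℝ (Rsp n) (Rsp m)).continuous).add
  ((Matrix.toEuclideanLin B).continuous_of_finiteDimensional.comp
    (WithLp.sndL 2 ℝ (Rsp n) (Rsp m)).continuous)

lemma Mfwd_add (v w : Rsp2 n m) : Mfwd A B (v + w) = Mfwd A B v + Mfwd A B w := by
  simp only [Mfwd, WithLp.ofLp_add, Prod.fst_add, Prod.snd_add, map_add]
  abel

lemma Mfwd_smul (c : ℝ) (w : Rsp2 n m) : Mfwd A B (c • w) = c • Mfwd A B w := by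
  simp [Mfwd, smul_add]

lemma inner_Mtr (w : Rsp2 n m) (p : Rsp n) : ⟪w, Mtr A B p⟫ = ⟪Mfwd A B w, p⟫ := by
  have hadj : ∀ {k : ℕ} (D : Matrix (Fin n) (Fin k) ℝ) (v : Rsp k),
      ⟪v, Matrix.toEuclideanLin Dᵀ p⟫ = ⟪Matrix.toEuclideanLin D v, p⟫ := fun D v => by
    rw [← Matrix.conjTranspose_eq_transpose_of_trivial, real_inner_comm,
      Matrix.toEuclideanLin_conjTranspose_eq_adjoint, LinearMap.adjoint_inner_left,
      real_inner_comm]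
  rw [WithLp.prod_inner_apply, Mtr, hadj, hadj, Mfwd, inner_add_left]

def bellmanSet (S : Set (Rsp n)) : Set (Rsp n) :=
  {x | ∃ u : Rsp m, gauge C (toLp 2 (x, u)) + gauge S (Mfwd A B (toLp 2 (x, u))) ≤ 1}

variable {A B C} {S : Set (Rsp n)}

lemma bellmanSet_eq_image :
    bellmanSet A B C S = Pxproj '' {w | gauge C w + gauge S (Mfwd A B w) ≤ 1} := by
  ext x
  exact ⟨fun ⟨u, hu⟩ => ⟨toLp 2 (x, u), hu, rfl⟩, fun ⟨w, hw, hwx⟩ => ⟨w.ofLp.2, hwx ▸ hw⟩⟩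

lemma mem_polarSet_add_image_Mtr_iff {T : Set (Rsp n)} {w : Rsp2 n m} :
    w ∈ polarSet (polarSet C + Mtr A B '' T) ↔
      ∀ a ∈ polarSet C, ∀ p ∈ T, ⟪a, w⟫ + ⟪p, Mfwd A B w⟫ ≤ 1 := by
  constructor
  · intro hw a ha p hp
    have h := hw _ (Set.add_mem_add ha (Set.mem_image_of_mem _ hp))
    rwa [inner_add_right, inner_Mtr, real_inner_comm _ w, real_inner_comm _ (Mfwd A B w)] at h
  · rintro h _ ⟨a, ha, _, ⟨p, hp, rfl⟩, rfl⟩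
    rw [inner_add_right, inner_Mtr, real_inner_comm _ w, real_inner_comm _ (Mfwd A B w)]
    exact h a ha p hp

lemma polarSet_polarSet_add_image_Mtr (hC : IsClosedConvexNhdZero C)
    (hS : IsClosedConvexNhdZero S) :
    polarSet (polarSet C + Mtr A B '' polarSet S) =
      {w | gauge C w + gauge S (Mfwd A B w) ≤ 1} := by
  ext w
  rw [mem_polarSet_add_image_Mtr_iff, Set.mem_ofPred_eq]
  constructor
  · intro hw
    have hS_le : ∀ a ∈ polarSet C, gauge S (Mfwd A B w) ≤ 1 - ⟪a, w⟫ := fun a ha =>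
      gauge_le_of_forall_inner_le hS.isClosed hS.convex hS.zero_mem
        (by simpa using hw a ha 0 zero_mem_polarSet) fun p hp => by linarith [hw a ha p hp]
    have hC_le : gauge C w ≤ 1 - gauge S (Mfwd A B w) :=
      gauge_le_of_forall_inner_le hC.isClosed hC.convex hC.zero_mem
        (by simpa using hS_le 0 zero_mem_polarSet) fun a ha => by linarith [hS_le a ha]
    linarith
  · intro hw a ha p hp
    linarith [inner_le_gauge_of_mem_polarSet hC.absorbent ha w,
      inner_le_gauge_of_mem_polarSet hS.absorbent hp (Mfwd A B w)]

lemma image_Pxproj_polarSet_eq_bellmanSet (hC : IsClosedConvexNhdZero C)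
    (hS : IsClosedConvexNhdZero S) :
    Pxproj '' polarSet (polarSet C + Mtr A B '' polarSet S) = bellmanSet A B C S := by
  rw [polarSet_polarSet_add_image_Mtr hC hS, bellmanSet_eq_image]

lemma gauge_add_gauge_Mfwd_smul {c : ℝ} (hc : 0 ≤ c) (w : Rsp2 n m) :
    gauge C (c • w) + gauge S (Mfwd A B (c • w)) = c * (gauge C w + gauge S (Mfwd A B w)) := by
  rw [Mfwd_smul, gauge_smul_of_nonneg hc, gauge_smul_of_nonneg hc, smul_eq_mul, smul_eq_mul,
    mul_add]

lemma mem_smul_bellmanSet_iff {t : ℝ} (ht : 0 < t) {x : Rsp n} :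
    x ∈ t • bellmanSet A B C S ↔
      ∃ u : Rsp m, gauge C (toLp 2 (x, u)) + gauge S (Mfwd A B (toLp 2 (x, u))) ≤ t := by
  rw [Set.mem_smul_set_iff_inv_smul_mem₀ ht.ne']
  constructor
  · rintro ⟨u, hu⟩
    refine ⟨t • u, ?_⟩
    have hw : (toLp 2 (x, t • u) : Rsp2 n m) = t • toLp 2 (t⁻¹ • x, u) := by
      show _ = toLp 2 (t • t⁻¹ • x, t • u)
      rw [smul_inv_smul₀ ht.ne']
    rw [hw, gauge_add_gauge_Mfwd_smul ht.le]
    exact mul_le_of_le_one_right ht.le hu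
  · rintro ⟨u, hu⟩
    refine ⟨t⁻¹ • u, ?_⟩
    have hw : (toLp 2 (t⁻¹ • x, t⁻¹ • u) : Rsp2 n m) = t⁻¹ • toLp 2 (x, u) := rfl
    rw [hw, gauge_add_gauge_Mfwd_smul (inv_nonneg.2 ht.le), inv_mul_le_one₀ ht]
    exact hu

lemma gauge_bellmanSet_le (x : Rsp n) (u : Rsp m) :
    gauge (bellmanSet A B C S) x ≤
      gauge C (toLp 2 (x, u)) + gauge S (Mfwd A B (toLp 2 (x, u))) :=
  le_of_forall_gt_imp_ge_of_dense fun t ht =>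
    have ht0 : 0 < t := (add_nonneg (gauge_nonneg _) (gauge_nonneg _)).trans_lt ht
    gauge_le_of_mem ht0.le ((mem_smul_bellmanSet_iff ht0).2 ⟨u, ht.le⟩)

lemma setOf_gauge_add_gauge_Mfwd_le_one_subset (hC : IsClosedConvexNhdZero C) :
    {w | gauge C w + gauge S (Mfwd A B w) ≤ 1} ⊆ C := fun w hw => by
  simpa using hC.mem_smul_of_gauge_le one_pos
    (by linarith [hw.out, gauge_nonneg (s := S) (Mfwd A B w)])

lemma bellmanSet_subset_closedBall (hC : IsClosedConvexNhdZero C) {R : ℝ}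
    (hCR : C ⊆ closedBall 0 R) : bellmanSet A B C S ⊆ closedBall 0 R := by
  rw [bellmanSet_eq_image]
  rintro _ ⟨w, hw, rfl⟩
  have := hCR (setOf_gauge_add_gauge_Mfwd_le_one_subset hC hw)
  rw [mem_closedBall_zero_iff] at this ⊢
  exact (WithLp.norm_fst_le (x := w)).trans this

lemma isCompact_bellmanSet (hC : IsProperCSet C) (hS : IsClosedConvexNhdZero S) :
    IsCompact (bellmanSet A B C S) := by
  have hC' := hC.isClosedConvexNhdZero
  rw [bellmanSet_eq_image]
  refine (hC.1.1.of_isClosed_subset ?_ (setOf_gauge_add_gauge_Mfwd_le_one_subset hC')).image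
    (WithLp.fstL 2 ℝ (Rsp n) (Rsp m)).continuous
  exact isClosed_le ((continuous_gauge hC'.convex hC'.mem_nhds).add
    ((continuous_gauge hS.convex hS.mem_nhds).comp (continuous_Mfwd A B))) continuous_const

lemma convex_bellmanSet (hC : IsClosedConvexNhdZero C) (hS : IsClosedConvexNhdZero S) :
    Convex ℝ (bellmanSet A B C S) := by
  rw [bellmanSet_eq_image]
  refine Convex.linear_image (fun v hv w hw a b ha hb hab => ?_)
    (WithLp.fstₗ 2 ℝ (Rsp n) (Rsp m))
  have hC' := gauge_smul_add_smul_le hC.convex hC.absorbent ha hb v w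
  have hS' := gauge_smul_add_smul_le hS.convex hS.absorbent ha hb (Mfwd A B v) (Mfwd A B w)
  rw [← Mfwd_smul, ← Mfwd_smul, ← Mfwd_add] at hS'
  show gauge C (a • v + b • w) + gauge S (Mfwd A B (a • v + b • w)) ≤ 1
  nlinarith [hv.out, hw.out]

lemma bellmanSet_mem_nhds (hC : IsClosedConvexNhdZero C) (hS : IsClosedConvexNhdZero S) :
    bellmanSet A B C S ∈ 𝓝 0 := by
  have hpair : Continuous fun x : Rsp n => (toLp 2 (x, 0) : Rsp2 n m) :=
    (WithLp.prod_continuous_toLp 2 (Rsp n) (Rsp m)).comp (continuous_id.prodMk continuous_const)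
  have hcost : Continuous fun x : Rsp n =>
      gauge C (toLp 2 (x, 0)) + gauge S (Mfwd A B (toLp 2 (x, 0))) :=
    ((continuous_gauge hC.convex hC.mem_nhds).comp hpair).add
      ((continuous_gauge hS.convex hS.mem_nhds).comp ((continuous_Mfwd A B).comp hpair))
  refine Filter.mem_of_superset (hcost.continuousAt.preimage_mem_nhds (Iic_mem_nhds ?_))
    fun x hx => ⟨0, hx⟩
  simp [show (toLp 2 (0, 0) : Rsp2 n m) = 0 from rfl, Mfwd]

lemma isClosedConvexNhdZero_bellmanSet (hC : IsProperCSet C) (hS : IsClosedConvexNhdZero S) :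
    IsClosedConvexNhdZero (bellmanSet A B C S) :=
  ⟨(isCompact_bellmanSet hC hS).isClosed, convex_bellmanSet hC.isClosedConvexNhdZero hS,
    bellmanSet_mem_nhds hC.isClosedConvexNhdZero hS⟩

lemma isClosedConvexNhdZero_iterate_bellmanSet (hC : IsProperCSet C)
    (hS : IsClosedConvexNhdZero S) (k : ℕ) :
    IsClosedConvexNhdZero ((bellmanSet A B C)^[k] S) := by
  induction k with
  | zero => exact hS
  | succ k ih =>
    rw [Function.iterate_succ_apply']
    exact isClosedConvexNhdZero_bellmanSet hC ih

lemma eq_iterate_bellmanSet_of_polar_recursion (hC : IsProperCSet C)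
    (hS : IsClosedConvexNhdZero S) {P : ℕ → Set (Rsp n)}
    (h0 : P 0 = Pxproj '' polarSet (polarSet C + Mtr A B '' polarSet S))
    (hsucc : ∀ k, P (k + 1) = Pxproj '' polarSet (polarSet C + Mtr A B '' polarSet (P k)))
    (k : ℕ) : P k = (bellmanSet A B C)^[k + 1] S := by
  induction k with
  | zero => rw [h0, image_Pxproj_polarSet_eq_bellmanSet hC.isClosedConvexNhdZero hS]; rfl
  | succ k ih =>
    rw [hsucc, ih, image_Pxproj_polarSet_eq_bellmanSet hC.isClosedConvexNhdZero
      (isClosedConvexNhdZero_iterate_bellmanSet hC hS _),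
      ← Function.iterate_succ_apply' (bellmanSet A B C)]

lemma isBounded_iterate_succ_bellmanSet (hC : IsProperCSet C) (k : ℕ) :
    Bornology.IsBounded ((bellmanSet A B C)^[k + 1] S) := by
  obtain ⟨R, hCR⟩ := hC.1.1.isBounded.subset_closedBall 0
  rw [Function.iterate_succ_apply']
  exact isBounded_closedBall.subset (bellmanSet_subset_closedBall hC.isClosedConvexNhdZero hCR)

end Bellman

section Cost

variable (A : Matrix (Fin n) (Fin n) ℝ) (B : Matrix (Fin n) (Fin m) ℝ) (C : Set (Rsp2 n m))

def traj (x : Rsp n) (u : ℕ → Rsp m) : ℕ → Rsp n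
  | 0 => x
  | i + 1 => Mfwd A B (toLp 2 (traj x u i, u i))

def runningCost (k : ℕ) (x : Rsp n) (u : ℕ → Rsp m) : ℝ :=
  ∑ i ∈ Finset.range k, gauge C (toLp 2 (traj A B x u i, u i))

def cost (S : Set (Rsp n)) (k : ℕ) (x : Rsp n) (u : ℕ → Rsp m) : ℝ :=
  runningCost A B C k x u + gauge S (traj A B x u k)

variable {A B C} {S : Set (Rsp n)}

lemma traj_succ' (x : Rsp n) (u : ℕ → Rsp m) (i : ℕ) :
    traj A B x u (i + 1) = traj A B (Mfwd A B (toLp 2 (x, u 0))) (fun j => u (j + 1)) i := by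
  induction i with
  | zero => rfl
  | succ i ih => rw [traj, ih]; rfl

lemma cost_zero (x : Rsp n) (u : ℕ → Rsp m) : cost A B C S 0 x u = gauge S x := by
  simp [cost, runningCost, traj]

lemma cost_succ (k : ℕ) (x : Rsp n) (u : ℕ → Rsp m) :
    cost A B C S (k + 1) x u = gauge C (toLp 2 (x, u 0)) +
      cost A B C S k (Mfwd A B (toLp 2 (x, u 0))) (fun j => u (j + 1)) := by
  simp only [cost, runningCost, Finset.sum_range_succ', traj_succ']
  simp only [traj]
  ring

lemma runningCost_mono (x : Rsp n) (u : ℕ → Rsp m) : Monotone (runningCost A B C · x u) :=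
  fun _ _ hij => Finset.sum_le_sum_of_subset_of_nonneg (Finset.range_subset_range.2 hij)
    fun _ _ _ => gauge_nonneg _

lemma runningCost_le_cost (k : ℕ) (x : Rsp n) (u : ℕ → Rsp m) :
    runningCost A B C k x u ≤ cost A B C S k x u :=
  le_add_of_nonneg_right (gauge_nonneg _)

lemma cost_le_cost_of_subset {T : Set (Rsp n)} (hS : Absorbent ℝ S) (hST : S ⊆ T) (k : ℕ)
    (x : Rsp n) (u : ℕ → Rsp m) : cost A B C T k x u ≤ cost A B C S k x u :=
  add_le_add_right (gauge_mono hS hST _) _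

lemma gauge_iterate_bellmanSet_le_cost (k : ℕ) (x : Rsp n) (u : ℕ → Rsp m) :
    gauge ((bellmanSet A B C)^[k] S) x ≤ cost A B C S k x u := by
  induction k generalizing x u with
  | zero => rw [cost_zero]; rfl
  | succ k ih =>
    rw [Function.iterate_succ_apply', cost_succ]
    exact (gauge_bellmanSet_le x (u 0)).trans (add_le_add_right (ih _ _) _)

lemma exists_cost_lt_of_gauge_iterate_bellmanSet_lt (hC : IsProperCSet C)
    (hS : IsClosedConvexNhdZero S) {k : ℕ} {x : Rsp n} {t : ℝ}
    (h : gauge ((bellmanSet A B C)^[k] S) x < t) : ∃ u, cost A B C S k x u < t := by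
  induction k generalizing x t with
  | zero => exact ⟨0, by rwa [cost_zero]⟩
  | succ k ih =>
    rw [Function.iterate_succ_apply'] at h
    obtain ⟨t', ht', ht't⟩ := exists_between h
    have hx := (isClosedConvexNhdZero_bellmanSet hC
      (isClosedConvexNhdZero_iterate_bellmanSet hC hS k)).mem_smul_of_gauge_le
      ((gauge_nonneg x).trans_lt ht') ht'.le
    obtain ⟨u₀, hu₀⟩ := (mem_smul_bellmanSet_iff ((gauge_nonneg x).trans_lt ht')).1 hx
    obtain ⟨u, hu⟩ := ih (x := Mfwd A B (toLp 2 (x, u₀)))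
      (t := t - gauge C (toLp 2 (x, u₀))) (by linarith)
    refine ⟨fun | 0 => u₀ | i + 1 => u i, ?_⟩
    rw [cost_succ]
    show gauge C (toLp 2 (x, u₀)) + cost A B C S k (Mfwd A B (toLp 2 (x, u₀))) u < t
    linarith

end Cost

def IsControlLyapunov (A : Matrix (Fin n) (Fin n) ℝ) (B : Matrix (Fin n) (Fin m) ℝ)
    (C : Set (Rsp2 n m)) (L : Set (Rsp n)) : Prop :=
  ∀ x : Rsp n, ∃ u : Rsp m,
    gauge L (Mfwd A B (toLp 2 (x, u))) + gauge C (toLp 2 (x, u)) ≤ gauge L x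

section Comparison

variable {A : Matrix (Fin n) (Fin n) ℝ} {B : Matrix (Fin n) (Fin m) ℝ} {C : Set (Rsp2 n m)}
  {L : Set (Rsp n)}

lemma gauge_bellmanSet_le_of_gauge_le {T T' : Set (Rsp n)}
    (hT : IsClosedConvexNhdZero (bellmanSet A B C T)) (h : ∀ y, gauge T' y ≤ gauge T y) :
    gauge (bellmanSet A B C T') ≤ gauge (bellmanSet A B C T) := by
  refine gauge_mono hT.absorbent ?_
  rintro x ⟨u, hu⟩
  exact ⟨u, (add_le_add_right (h _) _).trans hu⟩

lemma antitone_gauge_iterate_bellmanSet (hC : IsProperCSet C) (hL : IsClosedConvexNhdZero L)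
    (hLyap : IsControlLyapunov A B C L) :
    Antitone fun k => gauge ((bellmanSet A B C)^[k] L) := by
  refine antitone_nat_of_succ_le fun k => ?_
  induction k with
  | zero =>
    intro x
    obtain ⟨u, hu⟩ := hLyap x
    show gauge (bellmanSet A B C L) x ≤ gauge L x
    exact (gauge_bellmanSet_le x u).trans (by linarith)
  | succ k ih =>
    simp only [Function.iterate_succ_apply'] at ih ⊢
    exact gauge_bellmanSet_le_of_gauge_le (isClosedConvexNhdZero_bellmanSet hC
      (isClosedConvexNhdZero_iterate_bellmanSet hC hL k)) ih

variable {R ρ : ℝ}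

lemma gauge_iterate_le_mul_runningCost (hC : IsProperCSet C) (hL : IsClosedConvexNhdZero L)
    (hLyap : IsControlLyapunov A B C L) (hR : 0 < R) (hCR : C ⊆ closedBall 0 R) (hρ : 0 < ρ)
    (hLρ : ball 0 ρ ⊆ L) {k : ℕ} (hk : 0 < k) (x : Rsp n) (u : ℕ → Rsp m) :
    gauge ((bellmanSet A B C)^[k] L) x ≤ (1 + R / (ρ * k)) * runningCost A B C k x u := by
  set J := runningCost A B C k x u
  have hk' : (k : ℝ) ≠ 0 := Nat.cast_ne_zero.2 hk.ne'
  -- some stage of the trajectory costs at most the average `J / k`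
  obtain ⟨i, hi, hsmall⟩ : ∃ i ∈ Finset.range k,
      gauge C (toLp 2 (traj A B x u i, u i)) ≤ J / k := by
    refine Finset.exists_le_of_sum_le (Finset.nonempty_range_iff.2 hk.ne') (le_of_eq ?_)
    rw [Finset.sum_const, Finset.card_range, nsmul_eq_mul, mul_div_cancel₀ _ hk']
    rfl
  have hik : i ≤ k := (Finset.mem_range.1 hi).le
  have hxi : gauge L (traj A B x u i) ≤ R / ρ * (J / k) :=
    calc gauge L (traj A B x u i) ≤ ‖traj A B x u i‖ / ρ :=
          gauge_le_norm_div_of_ball_subset hρ hLρ _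
      _ ≤ R * gauge C (toLp 2 (traj A B x u i, u i)) / ρ := by
        gcongr
        exact (WithLp.norm_fst_le (x := toLp 2 (traj A B x u i, u i))).trans
          (norm_le_mul_gauge_of_subset_closedBall hC.isClosedConvexNhdZero.absorbent hR hCR _)
      _ ≤ R / ρ * (J / k) := by rw [mul_div_right_comm]; gcongr
  calc gauge ((bellmanSet A B C)^[k] L) x ≤ gauge ((bellmanSet A B C)^[i] L) x :=
        antitone_gauge_iterate_bellmanSet hC hL hLyap hik x
    _ ≤ cost A B C L i x u := gauge_iterate_bellmanSet_le_cost i x u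
    _ ≤ J + R / ρ * (J / k) := add_le_add (runningCost_mono x u hik) hxi
    _ = (1 + R / (ρ * k)) * J := by field_simp

lemma gauge_iterate_le_mul_gauge_iterate_univ (hC : IsProperCSet C)
    (hL : IsClosedConvexNhdZero L) (hLyap : IsControlLyapunov A B C L) (hR : 0 < R)
    (hCR : C ⊆ closedBall 0 R) (hρ : 0 < ρ) (hLρ : ball 0 ρ ⊆ L) {k : ℕ} (hk : 0 < k)
    (x : Rsp n) :
    gauge ((bellmanSet A B C)^[k] L) x ≤
      (1 + R / (ρ * k)) * gauge ((bellmanSet A B C)^[k] Set.univ) x := by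
  have hc : 0 < 1 + R / (ρ * k) := by positivity
  rw [← div_le_iff₀' hc]
  refine le_of_forall_gt_imp_ge_of_dense fun t ht => ?_
  obtain ⟨u, hu⟩ := exists_cost_lt_of_gauge_iterate_bellmanSet_lt hC IsClosedConvexNhdZero.univ ht
  rw [div_le_iff₀' hc]
  exact (gauge_iterate_le_mul_runningCost hC hL hLyap hR hCR hρ hLρ hk x u).trans
    (mul_le_mul_of_nonneg_left (runningCost_le_cost k x u |>.trans hu.le) hc.le)

lemma gauge_iterate_univ_le_gauge_iterate (hC : IsProperCSet C) (hL : IsClosedConvexNhdZero L)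
    (k : ℕ) (x : Rsp n) :
    gauge ((bellmanSet A B C)^[k] Set.univ) x ≤ gauge ((bellmanSet A B C)^[k] L) x := by
  refine le_of_forall_gt_imp_ge_of_dense fun t ht => ?_
  obtain ⟨u, hu⟩ := exists_cost_lt_of_gauge_iterate_bellmanSet_lt hC hL ht
  exact (gauge_iterate_bellmanSet_le_cost k x u).trans
    ((cost_le_cost_of_subset hL.absorbent (Set.subset_univ L) k x u).trans hu.le)

lemma hausdorffDist_iterate_bellmanSet_le (hC : IsProperCSet C) (hL : IsClosedConvexNhdZero L)
    (hLyap : IsControlLyapunov A B C L) (hR : 0 < R) (hCR : C ⊆ closedBall 0 R) (hρ : 0 < ρ)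
    (hLρ : ball 0 ρ ⊆ L) (k : ℕ) :
    hausdorffDist ((bellmanSet A B C)^[k + 1] Set.univ) ((bellmanSet A B C)^[k + 1] L) ≤
      R ^ 2 / (ρ * (k + 1)) := by
  have hk : 0 < k + 1 := k.succ_pos
  have hc : 0 < 1 + R / (ρ * (k + 1 : ℕ)) := by positivity
  have hLk := isClosedConvexNhdZero_iterate_bellmanSet (A := A) (B := B) hC hL (k + 1)
  have hsub : (bellmanSet A B C)^[k + 1] L ⊆ (bellmanSet A B C)^[k + 1] Set.univ := by
    simpa using (isClosedConvexNhdZero_iterate_bellmanSet hC IsClosedConvexNhdZero.univ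
      (k + 1)).subset_smul_of_gauge_le one_pos fun x => by
        simpa using gauge_iterate_univ_le_gauge_iterate hC hL (k + 1) x
  have hsmul := hLk.subset_smul_of_gauge_le hc
    (gauge_iterate_le_mul_gauge_iterate_univ hC hL hLyap hR hCR hρ hLρ hk)
  push_cast at hsmul
  refine (hausdorffDist_le_of_subset_smul (by positivity) hR.le hsub hsmul ?_).trans_eq (by ring)
  rw [Function.iterate_succ_apply']
  exact bellmanSet_subset_closedBall hC.isClosedConvexNhdZero hCR

lemma tendsto_hausdorffDist_iterate_bellmanSet (hC : IsProperCSet C)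
    (hL : IsClosedConvexNhdZero L) (hLyap : IsControlLyapunov A B C L) :
    Tendsto (fun k : ℕ => hausdorffDist ((bellmanSet A B C)^[k + 1] Set.univ)
      ((bellmanSet A B C)^[k + 1] L)) atTop (𝓝 0) := by
  obtain ⟨R, hR, hCR⟩ := hC.1.1.isBounded.subset_closedBall_lt 0 0
  obtain ⟨ρ, hρ, hLρ⟩ := Metric.mem_nhds_iff.1 hL.mem_nhds
  refine squeeze_zero (fun _ => hausdorffDist_nonneg)
    (hausdorffDist_iterate_bellmanSet_le hC hL hLyap hR hCR hρ hLρ) ?_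
  simpa [div_mul_eq_div_div, div_eq_mul_one_div (R ^ 2 / ρ)] using
    tendsto_one_div_add_atTop_nhds_zero_nat.const_mul (R ^ 2 / ρ)

end Comparison

theorem stmt_17_general (n m : ℕ) (A : Matrix (Fin n) (Fin n) ℝ) (B : Matrix (Fin n) (Fin m) ℝ)
    (C : Set (Rsp2 n m)) (hC : IsProperCSet C)
    (L : Set (Rsp n)) (hL : IsProperCSet L)
    (hLyap : ∀ x : Rsp n, ∃ u : Rsp m,
      mgauge L (Mfwd A B (WithLp.toLp 2 (x, u))) + mgauge C (WithLp.toLp 2 (x, u) : Rsp2 n m) ≤ mgauge L x)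
    (Plo Pup : ℕ → Set (Rsp n))
    (hPlo0 : Plo 0 = Pxproj '' polarSet (polarSet C + Mtr A B '' ({0} : Set (Rsp n))))
    (hPlos : ∀ k : ℕ,
      Plo (k + 1) = Pxproj '' polarSet (polarSet C + Mtr A B '' polarSet (Plo k)))
    (hPup0 : Pup 0 = Pxproj '' polarSet (polarSet C + Mtr A B '' polarSet L))
    (hPups : ∀ k : ℕ,
      Pup (k + 1) = Pxproj '' polarSet (polarSet C + Mtr A B '' polarSet (Pup k)))
    (PloInf PupInf : Set (Rsp n))
    (hloP : IsProperCSet PloInf) (hupP : IsProperCSet PupInf)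
    (hloConv : Tendsto (fun k : ℕ => Metric.hausdorffDist (Plo k) PloInf) atTop (nhds 0))
    (hupConv : Tendsto (fun k : ℕ => Metric.hausdorffDist (Pup k) PupInf) atTop (nhds 0)) :
    PloInf = PupInf := by
  have hLyap' : IsControlLyapunov A B C L := by
    simpa only [IsControlLyapunov, mgauge_eq_gauge ⟨0, hL.1.2.2⟩, mgauge_eq_gauge ⟨0, hC.1.2.2⟩]
      using hLyap
  have hL' := hL.isClosedConvexNhdZero
  obtain rfl : Plo = fun k => (bellmanSet A B C)^[k + 1] Set.univ :=
    funext <| eq_iterate_bellmanSet_of_polar_recursion hC .univ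
      (by rw [hPlo0, polarSet_univ]) hPlos
  obtain rfl : Pup = fun k => (bellmanSet A B C)^[k + 1] L :=
    funext <| eq_iterate_bellmanSet_of_polar_recursion hC hL' hPup0 hPups
  exact eq_of_tendsto_hausdorffDist hloP.1.1 hupP.1.1 ⟨0, hloP.1.2.2⟩ ⟨0, hupP.1.2.2⟩
    (fun k => ⟨0, (isClosedConvexNhdZero_iterate_bellmanSet hC .univ _).zero_mem⟩)
    (isBounded_iterate_succ_bellmanSet hC)
    (fun k => ⟨0, (isClosedConvexNhdZero_iterate_bellmanSet hC hL' _).zero_mem⟩)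
    (isBounded_iterate_succ_bellmanSet hC)
    hloConv hupConv (tendsto_hausdorffDist_iterate_bellmanSet hC hL' hLyap')

/-- the limits of the lower iterates (initial polar {0}) and of the
upper iterates (initial polar ℒ*) coincide. -/
theorem stmt_17 (n m : ℕ) (A : Matrix (Fin n) (Fin n) ℝ) (B : Matrix (Fin n) (Fin m) ℝ)
    (hstab : ∃ K : Matrix (Fin m) (Fin n) ℝ,
      Tendsto (fun k : ℕ => (A + B * K) ^ k) atTop (nhds 0))
    (C : Set (Rsp2 n m)) (hC : IsProperCSet C)
    (L : Set (Rsp n)) (hL : IsProperCSet L)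
    (hLyap : ∀ x : Rsp n, ∃ u : Rsp m,
      mgauge L (Mfwd A B (WithLp.toLp 2 (x, u))) + mgauge C (WithLp.toLp 2 (x, u) : Rsp2 n m) ≤ mgauge L x)
    (Plo Pup : ℕ → Set (Rsp n))
    (hPlo0 : Plo 0 = Pxproj '' polarSet (polarSet C + Mtr A B '' ({0} : Set (Rsp n))))
    (hPlos : ∀ k : ℕ,
      Plo (k + 1) = Pxproj '' polarSet (polarSet C + Mtr A B '' polarSet (Plo k)))
    (hPup0 : Pup 0 = Pxproj '' polarSet (polarSet C + Mtr A B '' polarSet L))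
    (hPups : ∀ k : ℕ,
      Pup (k + 1) = Pxproj '' polarSet (polarSet C + Mtr A B '' polarSet (Pup k)))
    (PloInf PupInf : Set (Rsp n))
    (hloP : IsProperCSet PloInf) (hupP : IsProperCSet PupInf)
    (hloConv : Tendsto (fun k : ℕ => Metric.hausdorffDist (Plo k) PloInf) atTop (nhds 0))
    (hupConv : Tendsto (fun k : ℕ => Metric.hausdorffDist (Pup k) PupInf) atTop (nhds 0)) :
    PloInf = PupInf :=
  stmt_17_general n m A B C hC L hL hLyap Plo Pup hPlo0 hPlos hPup0 hPups PloInf PupInf hloP hupP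
    hloConv hupConv
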